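/- For a ∈ ℝ_{>0}^B and β ∈ [0,1), the function h_a(x) = ((1/B)Σ_{i=1}^B a_i x_i^{-1})^{-β} is concave on the positive orthant ℝ_{>0}^B. -/

import Mathlib

open Finset Real

lemma orthant_convex (B : ℕ) : Convex ℝ {x : Fin B → ℝ | ∀ i, 0 < x i} := by
  have h : {x : Fin B → ℝ | ∀ i, 0 < x i} = Set.pi Set.univ (fun _ => Set.Ioi (0:ℝ)) := by
    ext x; simp [Set.mem_pi]
  rw [h]
  exact convex_pi fun i _ => convex_Ioi 0

/-- The weighted harmonic-mean-type function `x ↦ (∑ i, a i / x i)⁻¹` is concave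
on the positive orthant. -/
lemma harmonic_concave (B : ℕ) (hB : 0 < B) (a : Fin B → ℝ) (ha : ∀ i, 0 < a i) :
    ConcaveOn ℝ {x : Fin B → ℝ | ∀ i, 0 < x i} (fun x => (∑ i, a i / x i)⁻¹) := by
  haveI : Nonempty (Fin B) := Fin.pos_iff_nonempty.mp hB
  refine ⟨orthant_convex B, ?_⟩
  intro x hx y hy p q hp hq hpq
  have hu : ∀ i, 0 < (p • x + q • y) i := orthant_convex B hx hy hp hq hpq
  have hxi : ∀ i, (0:ℝ) < x i := hx
  have hyi : ∀ i, (0:ℝ) < y i := hy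
  set u : Fin B → ℝ := p • x + q • y with hudef
  have hui : ∀ i, u i = p * x i + q * y i := fun i => by
    simp [hudef, Pi.add_apply, Pi.smul_apply, smul_eq_mul]
  set Sx := ∑ i, a i / x i with hSxdef
  set Sy := ∑ i, a i / y i with hSydef
  set Su := ∑ i, a i / u i with hSudef
  have hSx : 0 < Sx := Finset.sum_pos (fun i _ => div_pos (ha i) (hxi i)) Finset.univ_nonempty
  have hSy : 0 < Sy := Finset.sum_pos (fun i _ => div_pos (ha i) (hyi i)) Finset.univ_nonempty
  have hSu : 0 < Su := Finset.sum_pos (fun i _ => div_pos (ha i) (hu i)) Finset.univ_nonempty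
  set Tx := ∑ i, (a i / u i) ^ 2 * x i / a i with hTxdef
  set Ty := ∑ i, (a i / u i) ^ 2 * y i / a i with hTydef
  -- Cauchy–Schwarz in the form `(∑ r)² ≤ (∑ f)(∑ g)` with `r i ^ 2 = f i * g i`
  have hCSx : Su ^ 2 ≤ Sx * Tx := by
    refine Finset.sum_sq_le_sum_mul_sum_of_sq_eq_mul _
      (fun i _ => (div_pos (ha i) (hxi i)).le)
      (fun i _ => (div_pos (mul_pos (pow_pos (div_pos (ha i) (hu i)) 2) (hxi i)) (ha i)).le)
      (fun i _ => ?_)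
    have h1 : a i ≠ 0 := (ha i).ne'
    have h2 : x i ≠ 0 := (hxi i).ne'
    have h3 : u i ≠ 0 := (hu i).ne'
    field_simp
  have hCSy : Su ^ 2 ≤ Sy * Ty := by
    refine Finset.sum_sq_le_sum_mul_sum_of_sq_eq_mul _
      (fun i _ => (div_pos (ha i) (hyi i)).le)
      (fun i _ => (div_pos (mul_pos (pow_pos (div_pos (ha i) (hu i)) 2) (hyi i)) (ha i)).le)
      (fun i _ => ?_)
    have h1 : a i ≠ 0 := (ha i).ne'
    have h2 : y i ≠ 0 := (hyi i).ne'
    have h3 : u i ≠ 0 := (hu i).ne'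
    field_simp
  have hT : p * Tx + q * Ty = Su := by
    rw [hTxdef, hTydef, hSudef, Finset.mul_sum, Finset.mul_sum, ← Finset.sum_add_distrib]
    refine Finset.sum_congr rfl fun i _ => ?_
    have h1 : a i ≠ 0 := (ha i).ne'
    have h3 : u i ≠ 0 := (hu i).ne'
    rw [hui i] at h3 ⊢
    field_simp
  have h1 : Sx⁻¹ ≤ Tx / Su ^ 2 := by
    rw [inv_eq_one_div, div_le_div_iff₀ hSx (by positivity)]
    nlinarith
  have h2 : Sy⁻¹ ≤ Ty / Su ^ 2 := by
    rw [inv_eq_one_div, div_le_div_iff₀ hSy (by positivity)]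
    nlinarith
  have hfin : p * (Tx / Su ^ 2) + q * (Ty / Su ^ 2) = Su⁻¹ := by
    have heq : p * (Tx / Su ^ 2) + q * (Ty / Su ^ 2) = (p * Tx + q * Ty) / Su ^ 2 := by ring
    rw [heq, hT, sq, ← div_div, div_self hSu.ne', one_div]
  calc p • Sx⁻¹ + q • Sy⁻¹ = p * Sx⁻¹ + q * Sy⁻¹ := by simp [smul_eq_mul]
    _ ≤ p * (Tx / Su ^ 2) + q * (Ty / Su ^ 2) :=
        add_le_add (mul_le_mul_of_nonneg_left h1 hp) (mul_le_mul_of_nonneg_left h2 hq)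
    _ = Su⁻¹ := hfin

/-- For `a ∈ ℝ_{>0}^B` and `β ∈ [0,1)`, the function
`h_a(x) = ((1/B) ∑ i, a i / x i) ^ (-β)` is concave on the positive orthant. -/
theorem stmt_4 (B : ℕ) (hB : 0 < B) (a : Fin B → ℝ) (ha : ∀ i, 0 < a i)
    (β : ℝ) (hβ0 : 0 ≤ β) (hβ1 : β < 1) :
    ConcaveOn ℝ {x : Fin B → ℝ | ∀ i, 0 < x i}
      (fun x => ((1 / (B : ℝ)) * ∑ i, a i / x i) ^ (-β)) := by
  haveI : Nonempty (Fin B) := Fin.pos_iff_nonempty.mp hB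
  have hkey := harmonic_concave B hB a ha
  refine ⟨orthant_convex B, ?_⟩
  intro x hx y hy p q hp hq hpq
  have hxi : ∀ i, (0:ℝ) < x i := hx
  have hyi : ∀ i, (0:ℝ) < y i := hy
  have hu : ∀ i, 0 < (p • x + q • y) i := orthant_convex B hx hy hp hq hpq
  set u : Fin B → ℝ := p • x + q • y with hudef
  have hBpos : (0:ℝ) < (B:ℝ) := Nat.cast_pos.mpr hB
  set Sx := ∑ i, a i / x i with hSxdef
  set Sy := ∑ i, a i / y i with hSydef
  set Su := ∑ i, a i / u i with hSudef
  have hSx : 0 < Sx := Finset.sum_pos (fun i _ => div_pos (ha i) (hxi i)) Finset.univ_nonempty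
  have hSy : 0 < Sy := Finset.sum_pos (fun i _ => div_pos (ha i) (hyi i)) Finset.univ_nonempty
  have hSu : 0 < Su := Finset.sum_pos (fun i _ => div_pos (ha i) (hu i)) Finset.univ_nonempty
  have hrw : ∀ S : ℝ, 0 < S → ((1 / (B : ℝ)) * S) ^ (-β) = ((B : ℝ) * S⁻¹) ^ β := by
    intro S hS
    have hnn : (0:ℝ) ≤ (1 / (B : ℝ)) * S := by positivity
    rw [Real.rpow_neg hnn, ← Real.inv_rpow hnn, mul_inv, one_div, inv_inv]
  show p • ((1 / (B : ℝ)) * Sx) ^ (-β) + q • ((1 / (B : ℝ)) * Sy) ^ (-β)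
      ≤ ((1 / (B : ℝ)) * Su) ^ (-β)
  rw [hrw Sx hSx, hrw Sy hSy, hrw Su hSu]
  have hharm : p * Sx⁻¹ + q * Sy⁻¹ ≤ Su⁻¹ := by
    have := hkey.2 hx hy hp hq hpq
    simpa [smul_eq_mul, hSxdef, hSydef, hSudef, hudef] using this
  have hA : (0:ℝ) ≤ (B : ℝ) * Sx⁻¹ := by positivity
  have hC : (0:ℝ) ≤ (B : ℝ) * Sy⁻¹ := by positivity
  have hconc := (Real.concaveOn_rpow hβ0 hβ1.le).2 (Set.mem_Ici.mpr hA) (Set.mem_Ici.mpr hC)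
    hp hq hpq
  simp only [smul_eq_mul] at hconc ⊢
  refine le_trans hconc ?_
  have hmono : p * ((B : ℝ) * Sx⁻¹) + q * ((B : ℝ) * Sy⁻¹) ≤ (B : ℝ) * Su⁻¹ := by
    nlinarith
  exact Real.rpow_le_rpow (by positivity) hmono hβ0
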